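/- arXiv:math/0609599 — 4 statements merged into one kernel-verified Lean document; each statement's English description precedes it below -/
import Mathlib

section
/- Let A : ℝ^m → ℝ^n be a linear map whose matrix (in the canonical bases) has all entries in {-1, 0, 1}, and suppose every row and every column of this matrix has at most k nonzero entries. Then there exists a linear map B : ℝ^n → ℝ^m such that A∘B∘A = A and ‖B u‖² ≤ n·k^(2n)·‖u‖² for all u ∈ ℝ^n. -/
open Matrix Polynomial

lemma my_charpoly_diagonal {N : Type*} [Fintype N] [DecidableEq N] (d : N → ℝ) :
    (Matrix.diagonal d).charpoly = ∏ i, (X - C (d i)) := by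
  have : charmatrix (diagonal d) = diagonal (fun i => (X : ℝ[X]) - C (d i)) := by
    ext i j
    by_cases h : i = j
    · subst h; simp
    · simp [charmatrix_apply_ne _ _ _ h, Matrix.diagonal_apply_ne _ h]
  rw [Matrix.charpoly, this, Matrix.det_diagonal]

lemma my_charpoly_conj {N : Type*} [Fintype N] [DecidableEq N]
    (U D : Matrix N N ℝ) (hU : U * star U = 1) :
    (U * D * star U).charpoly = D.charpoly := by
  have key : charmatrix (U * D * star U)
      = ((C : ℝ →+* ℝ[X]).mapMatrix U) * charmatrix D * ((C : ℝ →+* ℝ[X]).mapMatrix (star U)) := by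
    unfold charmatrix
    rw [mul_sub, sub_mul]
    congr 1
    · have hs : (Matrix.scalar N (X : ℝ[X])) = (X : ℝ[X]) • (1 : Matrix N N ℝ[X]) := by
        ext i j; by_cases h : i = j <;> simp [h]
      rw [hs, Matrix.mul_smul, Matrix.smul_mul, mul_one,
        ← _root_.map_mul ((C : ℝ →+* ℝ[X]).mapMatrix) U (star U), hU, _root_.map_one]
    · rw [← _root_.map_mul ((C : ℝ →+* ℝ[X]).mapMatrix),
        ← _root_.map_mul ((C : ℝ →+* ℝ[X]).mapMatrix)]
  rw [Matrix.charpoly, Matrix.charpoly, key, Matrix.det_mul, Matrix.det_mul,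
    mul_comm ((C : ℝ →+* ℝ[X]).mapMatrix U).det _, mul_assoc, ← Matrix.det_mul,
    ← _root_.map_mul ((C : ℝ →+* ℝ[X]).mapMatrix) U (star U), hU, _root_.map_one,
    Matrix.det_one, mul_one]

lemma my_prod_nonzero_eig_ge_one {n : ℕ} (M : Matrix (Fin n) (Fin n) ℝ)
    (MZ : Matrix (Fin n) (Fin n) ℤ)
    (hmap : MZ.map (Int.cast : ℤ → ℝ) = M)
    (lam : Fin n → ℝ)
    (hchar : M.charpoly = ∏ i, (X - C (lam i)))
    (hpos : ∀ i, 0 ≤ lam i) :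
    1 ≤ ∏ i ∈ Finset.univ.filter (fun i => lam i ≠ 0), lam i := by
  classical
  set S := Finset.univ.filter (fun i : Fin n => lam i ≠ 0) with hS
  set T := Finset.univ.filter (fun i : Fin n => ¬ lam i ≠ 0) with hT
  have hsplit : (∏ i ∈ S, (X - C (lam i))) * ∏ i ∈ T, (X - C (lam i))
      = ∏ i, (X - C (lam i)) :=
    Finset.prod_filter_mul_prod_filter_not Finset.univ _ _
  have hTX : ∏ i ∈ T, ((X:ℝ[X]) - C (lam i)) = X ^ T.card := by
    rw [Finset.prod_congr rfl (fun i hi => ?_), Finset.prod_const]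
    rw [hT, Finset.mem_filter] at hi
    rw [not_not.mp hi.2, map_zero, sub_zero]
  have hq : M.charpoly = X ^ T.card * ∏ i ∈ S, (X - C (lam i)) := by
    rw [hchar, ← hsplit, hTX, mul_comm]
  have hco : M.charpoly.coeff T.card = ∏ i ∈ S, (- lam i) := by
    rw [hq]
    have := Polynomial.coeff_X_pow_mul (∏ i ∈ S, ((X:ℝ[X]) - C (lam i))) T.card 0
    rw [zero_add] at this
    rw [this, Polynomial.coeff_zero_eq_eval_zero, Polynomial.eval_prod]
    simp
  have hmapc : M.charpoly = (MZ.charpoly).map (Int.castRingHom ℝ) := by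
    rw [← hmap]
    exact Matrix.charpoly_map MZ (Int.castRingHom ℝ)
  have hcoZ : (↑(MZ.charpoly.coeff T.card) : ℝ) = ∏ i ∈ S, (- lam i) := by
    rw [← hco, hmapc, Polynomial.coeff_map]; rfl
  have hne : (∏ i ∈ S, (- lam i)) ≠ 0 := by
    apply Finset.prod_ne_zero_iff.mpr
    intro i hi
    rw [hS, Finset.mem_filter] at hi
    simpa using hi.2
  have hZne : MZ.charpoly.coeff T.card ≠ 0 := by
    intro h; rw [h] at hcoZ; simp at hcoZ; exact hne hcoZ.symm
  have h1 : (1 : ℝ) ≤ |(↑(MZ.charpoly.coeff T.card) : ℝ)| := by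
    rw [← Int.cast_abs]
    exact_mod_cast Int.one_le_abs hZne
  rw [hcoZ, Finset.abs_prod] at h1
  calc (1:ℝ) ≤ ∏ i ∈ S, |(- lam i)| := h1
    _ = ∏ i ∈ S, lam i := by
        apply Finset.prod_congr rfl; intro i hi
        rw [abs_neg, abs_of_nonneg (hpos i)]

lemma my_quad_bound {m n k : ℕ} (A : Matrix (Fin n) (Fin m) ℝ)
    (hent : ∀ i j, A i j = -1 ∨ A i j = 0 ∨ A i j = 1)
    (hrow : ∀ i : Fin n, (Finset.univ.filter fun j : Fin m => A i j ≠ 0).card ≤ k)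
    (hcol : ∀ j : Fin m, (Finset.univ.filter fun i : Fin n => A i j ≠ 0).card ≤ k)
    (v : Fin n → ℝ) :
    ∑ j, (∑ i, A i j * v i) ^ 2 ≤ (k : ℝ) ^ 2 * ∑ i, (v i) ^ 2 := by
  have sq01 : ∀ i j, (A i j) ^ 2 = if A i j ≠ 0 then (1 : ℝ) else 0 := by
    intro i j; rcases hent i j with h | h | h <;> norm_num [h]
  have colsq : ∀ j, ∑ i, (A i j) ^ 2 ≤ (k : ℝ) := by
    intro j
    calc ∑ i, (A i j) ^ 2 = ∑ i, if A i j ≠ 0 then (1:ℝ) else 0 := by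
          simp only [sq01]
      _ = ((Finset.univ.filter fun i : Fin n => A i j ≠ 0).card : ℝ) := by
          rw [← Finset.sum_filter, Finset.sum_const, nsmul_eq_mul, mul_one]
      _ ≤ (k : ℝ) := by exact_mod_cast hcol j
  have step1 : ∀ j, (∑ i, A i j * v i) ^ 2 ≤
      (k : ℝ) * ∑ i, if A i j ≠ 0 then (v i) ^ 2 else 0 := by
    intro j
    have cs := Finset.sum_mul_sq_le_sq_mul_sq Finset.univ (fun i => A i j)
      (fun i => if A i j ≠ 0 then v i else 0)
    have e1 : ∑ i, A i j * (if A i j ≠ 0 then v i else 0) = ∑ i, A i j * v i := by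
      apply Finset.sum_congr rfl; intro i _
      by_cases h : A i j = 0 <;> simp [h]
    have e2 : ∑ i, (if A i j ≠ 0 then v i else 0) ^ 2
        = ∑ i, if A i j ≠ 0 then (v i) ^ 2 else 0 := by
      apply Finset.sum_congr rfl; intro i _
      by_cases h : A i j = 0 <;> simp [h]
    rw [e1, e2] at cs
    refine cs.trans ?_
    have hnn : (0:ℝ) ≤ ∑ i, if A i j ≠ 0 then (v i) ^ 2 else 0 :=
      Finset.sum_nonneg fun i _ => by positivity
    exact mul_le_mul_of_nonneg_right (colsq j) hnn
  calc ∑ j, (∑ i, A i j * v i) ^ 2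
      ≤ ∑ j, (k : ℝ) * ∑ i, if A i j ≠ 0 then (v i) ^ 2 else 0 :=
        Finset.sum_le_sum fun j _ => step1 j
    _ = (k : ℝ) * ∑ i, ((Finset.univ.filter fun j : Fin m => A i j ≠ 0).card : ℝ) * (v i) ^ 2 := by
        rw [← Finset.mul_sum, Finset.sum_comm]
        congr 1
        apply Finset.sum_congr rfl; intro i _
        rw [← Finset.sum_filter, Finset.sum_const, nsmul_eq_mul]
    _ ≤ (k : ℝ) * ∑ i, (k : ℝ) * (v i) ^ 2 := by
        apply mul_le_mul_of_nonneg_left _ (by positivity)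
        apply Finset.sum_le_sum; intro i _
        apply mul_le_mul_of_nonneg_right _ (by positivity)
        exact_mod_cast hrow i
    _ = (k : ℝ) ^ 2 * ∑ i, (v i) ^ 2 := by rw [← Finset.mul_sum]; ring

/-- Let `A : ℝ^m → ℝ^n` be a linear map whose matrix (in the canonical
bases) has all entries in `{-1, 0, 1}`, and suppose every row and every column has at
most `k` nonzero entries.  Then there exists `B : ℝ^n → ℝ^m` with `A ∘ B ∘ A = A` and
`‖B u‖² ≤ n · k^(2n) · ‖u‖²` for all `u` (Euclidean norms, written as sums of squares). -/
theorem stmt_0 (m n k : ℕ) (A : Matrix (Fin n) (Fin m) ℝ)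
    (hentries : ∀ i j, A i j = -1 ∨ A i j = 0 ∨ A i j = 1)
    (hrow : ∀ i : Fin n, (Finset.univ.filter fun j : Fin m => A i j ≠ 0).card ≤ k)
    (hcol : ∀ j : Fin m, (Finset.univ.filter fun i : Fin n => A i j ≠ 0).card ≤ k) :
    ∃ B : Matrix (Fin m) (Fin n) ℝ,
      A * B * A = A ∧
      ∀ u : Fin n → ℝ,
        ∑ j, (B.mulVec u j) ^ 2 ≤ (n : ℝ) * (k : ℝ) ^ (2 * n) * ∑ i, (u i) ^ 2 := by
  classical
  -- trivial cases
  rcases Nat.eq_zero_or_pos n with hn | hn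
  · subst hn
    refine ⟨0, ?_, ?_⟩
    · ext i j; exact i.elim0
    · intro u
      simp [Matrix.mulVec]
  rcases Nat.eq_zero_or_pos k with hk | hk
  · subst hk
    have hA0 : A = 0 := by
      ext i j
      by_contra h
      have : (Finset.univ.filter fun i' : Fin n => A i' j ≠ 0).card = 0 :=
        Nat.le_zero.mp (hcol j)
      rw [Finset.card_eq_zero, Finset.filter_eq_empty_iff] at this
      exact this (Finset.mem_univ i) h
    refine ⟨0, by simp [hA0], ?_⟩
    intro u
    have h2n : 2 * n ≠ 0 := by omega
    simp [Matrix.mulVec, zero_pow h2n]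
  -- main case
  set M : Matrix (Fin n) (Fin n) ℝ := A * Aᴴ with hMdef
  have hM : M.IsHermitian := isHermitian_mul_conjTranspose_self A
  set lam : Fin n → ℝ := hM.eigenvalues with hlam
  set U : Matrix (Fin n) (Fin n) ℝ := (hM.eigenvectorUnitary : Matrix (Fin n) (Fin n) ℝ)
    with hUdef
  have hU : U * star U = 1 := (Matrix.mem_unitaryGroup_iff).mp hM.eigenvectorUnitary.2
  have hU' : star U * U = 1 := (Matrix.mem_unitaryGroup_iff').mp hM.eigenvectorUnitary.2
  have hspec : M = U * diagonal lam * star U := by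
    have h := hM.spectral_theorem
    have h2 : (RCLike.ofReal : ℝ → ℝ) ∘ hM.eigenvalues = lam := by
      funext i; simp [hlam]
    rw [h2] at h
    exact h
  -- conjugation of diagonals
  have conj_mul : ∀ a b : Fin n → ℝ,
      (U * diagonal a * star U) * (U * diagonal b * star U)
        = U * diagonal (fun i => a i * b i) * star U := by
    intro a b
    calc (U * diagonal a * star U) * (U * diagonal b * star U)
        = U * diagonal a * ((star U * U) * (diagonal b * star U)) := by
          simp only [Matrix.mul_assoc]
      _ = U * (diagonal a * diagonal b) * star U := by
          rw [hU', Matrix.one_mul]; simp only [Matrix.mul_assoc]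
      _ = U * diagonal (fun i => a i * b i) * star U := by
          rw [Matrix.diagonal_mul_diagonal]
  -- eigenvalue bounds
  have hpos : ∀ i, 0 ≤ lam i := fun i =>
    (Matrix.posSemidef_self_mul_conjTranspose A).eigenvalues_nonneg i
  have hval : ∀ i, lam i = ∑ j, (∑ l, A l j * (hM.eigenvectorBasis i) l) ^ 2 := by
    intro i
    rw [hlam, hM.eigenvalues_eq i]
    set v : Fin n → ℝ := ⇑(hM.eigenvectorBasis i) with hv
    have h1 : star v = v := by simp
    have h2 : M *ᵥ v = A *ᵥ (Aᴴ *ᵥ v) := by rw [mulVec_mulVec]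
    rw [h1, h2, dotProduct_mulVec, ← Matrix.mulVec_transpose,
      Matrix.conjTranspose_eq_transpose_of_trivial A]
    simp only [RCLike.re_to_real, dotProduct, Matrix.mulVec, Matrix.transpose_apply,
      dotProduct, sq]
  have hnorm1 : ∀ i, ∑ l, ((hM.eigenvectorBasis i) l) ^ 2 = 1 := by
    intro i
    have h := hM.eigenvectorBasis.orthonormal.1 i
    have hne := EuclideanSpace.norm_eq (hM.eigenvectorBasis i)
    rw [h] at hne
    have h2 : ∑ l, ‖(hM.eigenvectorBasis i) l‖ ^ 2 = 1 := by
      nlinarith [Real.sq_sqrt (show (0:ℝ) ≤ ∑ l, ‖(hM.eigenvectorBasis i) l‖ ^ 2 from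
        Finset.sum_nonneg fun l _ => by positivity)]
    simpa [Real.norm_eq_abs, sq_abs] using h2
  have hub : ∀ i, lam i ≤ (k:ℝ) ^ 2 := by
    intro i
    rw [hval i]
    calc ∑ j, (∑ l, A l j * (hM.eigenvectorBasis i) l) ^ 2
        ≤ (k : ℝ) ^ 2 * ∑ l, ((hM.eigenvectorBasis i) l) ^ 2 :=
          my_quad_bound A hentries hrow hcol _
      _ = (k : ℝ) ^ 2 := by rw [hnorm1 i, mul_one]
  -- integrality: product of nonzero eigenvalues ≥ 1
  set AZ : Matrix (Fin n) (Fin m) ℤ :=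
    Matrix.of (fun i j => if A i j = 1 then 1 else if A i j = -1 then -1 else 0) with hAZ
  have hAZmap : AZ.map (Int.cast : ℤ → ℝ) = A := by
    ext i j
    rcases hentries i j with h | h | h <;> norm_num [hAZ, h]
  have hAZE : ∀ i j, ((AZ i j : ℤ) : ℝ) = A i j := by
    intro i j
    have := congrFun (congrFun hAZmap i) j
    simpa using this
  have hMZmap : (AZ * AZᵀ).map (Int.cast : ℤ → ℝ) = M := by
    ext i j
    simp only [Matrix.map_apply, Matrix.mul_apply, Matrix.transpose_apply, hMdef,
      Matrix.conjTranspose_apply, star_trivial]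
    push_cast
    exact Finset.sum_congr rfl fun l _ => by rw [hAZE, hAZE]
  have hchar : M.charpoly = ∏ i, (X - C (lam i)) := by
    rw [hspec, my_charpoly_conj U (diagonal lam) hU, my_charpoly_diagonal]
  have hprod : 1 ≤ ∏ i ∈ Finset.univ.filter (fun i => lam i ≠ 0), lam i :=
    my_prod_nonzero_eig_ge_one M (AZ * AZᵀ) hMZmap lam hchar hpos
  -- each nonzero eigenvalue is ≥ k^(-2n), i.e. lam i * k^(2n) ≥ 1
  have hK1 : (1:ℝ) ≤ (k:ℝ) := by exact_mod_cast hk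
  have hKpos : (0:ℝ) < (k:ℝ) ^ (2 * n) := by positivity
  have hinvle : ∀ i, (lam i)⁻¹ ≤ (k:ℝ) ^ (2 * n) := by
    intro i
    by_cases hzi : lam i = 0
    · rw [hzi, _root_.inv_zero]; exact hKpos.le
    · have hiS : i ∈ Finset.univ.filter (fun i => lam i ≠ 0) := by
        simp [hzi]
      have hposS : ∀ j ∈ (Finset.univ.filter (fun i => lam i ≠ 0)).erase i, 0 < lam j := by
        intro j hj
        rcases (hpos j).lt_or_eq with h | h
        · exact h
        · exfalso
          have := Finset.mem_of_mem_erase hj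
          rw [Finset.mem_filter] at this
          exact this.2 h.symm
      have hQle : ∏ j ∈ (Finset.univ.filter (fun i => lam i ≠ 0)).erase i, lam j
          ≤ (k:ℝ) ^ (2 * n) := by
        calc ∏ j ∈ (Finset.univ.filter (fun i => lam i ≠ 0)).erase i, lam j
            ≤ ∏ _j ∈ (Finset.univ.filter (fun i => lam i ≠ 0)).erase i, (k:ℝ)^2 := by
              apply Finset.prod_le_prod
              · intro j hj; exact (hposS j hj).le
              · intro j hj; exact hub j
          _ = ((k:ℝ)^2) ^ ((Finset.univ.filter (fun i => lam i ≠ 0)).erase i).card := by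
              rw [Finset.prod_const]
          _ ≤ ((k:ℝ)^2) ^ n := by
              apply pow_le_pow_right₀ (by nlinarith)
              calc ((Finset.univ.filter (fun i => lam i ≠ 0)).erase i).card
                  ≤ (Finset.univ : Finset (Fin n)).card :=
                    Finset.card_le_card ((Finset.erase_subset _ _).trans
                      (Finset.filter_subset _ _))
                _ = n := Finset.card_univ.trans (Fintype.card_fin n)
          _ = (k:ℝ) ^ (2 * n) := by rw [← pow_mul]
      have hkey : (1:ℝ) ≤ lam i * (k:ℝ) ^ (2 * n) := by
        calc (1:ℝ) ≤ ∏ j ∈ Finset.univ.filter (fun i => lam i ≠ 0), lam j := hprod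
          _ = lam i * ∏ j ∈ (Finset.univ.filter (fun i => lam i ≠ 0)).erase i, lam j :=
              (Finset.mul_prod_erase _ _ hiS).symm
          _ ≤ lam i * (k:ℝ) ^ (2 * n) := by
              apply mul_le_mul_of_nonneg_left hQle (hpos i)
      have hlpos : 0 < lam i := (hpos i).lt_of_ne (Ne.symm hzi)
      rw [inv_le_iff_one_le_mul₀ hlpos]
      linarith [hkey]
  -- the pseudoinverse
  set G : Matrix (Fin n) (Fin n) ℝ := U * diagonal (fun i => (lam i)⁻¹) * star U with hGdef
  refine ⟨Aᴴ * G, ?_, ?_⟩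
  · -- A * (Aᴴ * G) * A = A
    have hMGM : M * G * M = M := by
      rw [hspec, hGdef, conj_mul, conj_mul]
      congr 2
      funext i
      by_cases h : lam i = 0 <;> field_simp [h]
    have hz : (1 - M * G) * M = 0 := by
      rw [Matrix.sub_mul, Matrix.one_mul, hMGM, sub_self]
    have hNAzero : (1 - M * G) * A = 0 := by
      apply Matrix.self_mul_conjTranspose_eq_zero.mp
      calc (1 - M * G) * A * ((1 - M * G) * A)ᴴ
          = (1 - M * G) * M * (1 - M * G)ᴴ := by
            rw [Matrix.conjTranspose_mul, hMdef]
            simp only [Matrix.mul_assoc]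
        _ = 0 := by rw [hz, Matrix.zero_mul]
    have hfinal : M * G * A = A := by
      have h := hNAzero
      rw [Matrix.sub_mul, Matrix.one_mul, sub_eq_zero] at h
      exact h.symm
    calc A * (Aᴴ * G) * A = M * G * A := by rw [hMdef]; simp only [Matrix.mul_assoc]
      _ = A := hfinal
  · -- the norm bound
    intro u
    have hMG : M * G = U * diagonal (fun i => lam i * (lam i)⁻¹) * star U := by
      rw [hspec, hGdef, conj_mul]
    have hGMG : G * (M * G) = G := by
      rw [hMG, hGdef, conj_mul]
      congr 2
      funext i
      by_cases h : lam i = 0 <;> field_simp [h]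
    have hGH : Gᴴ = G := by
      have hst : (star (fun i => (lam i)⁻¹) : Fin n → ℝ) = fun i => (lam i)⁻¹ := by
        funext i; exact star_trivial _
      rw [hGdef, Matrix.star_eq_conjTranspose, Matrix.conjTranspose_mul,
        Matrix.conjTranspose_mul, Matrix.conjTranspose_conjTranspose,
        Matrix.diagonal_conjTranspose, hst, Matrix.mul_assoc]
    have hGT : Gᵀ = G := by
      rw [← Matrix.conjTranspose_eq_transpose_of_trivial]; exact hGH
    have hUT : Uᵀ = star U := by
      rw [Matrix.star_eq_conjTranspose, ← Matrix.conjTranspose_eq_transpose_of_trivial]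
    set w : Fin n → ℝ := star U *ᵥ u with hw
    -- Step B : the quadratic form reduces to G
    have stepB : ∑ j, ((Aᴴ * G) *ᵥ u) j ^ 2 = (G *ᵥ u) ⬝ᵥ u := by
      have e0 : ∑ j, ((Aᴴ * G) *ᵥ u) j ^ 2 = ((Aᴴ * G) *ᵥ u) ⬝ᵥ ((Aᴴ * G) *ᵥ u) := by
        simp [dotProduct, sq]
      rw [e0, ← Matrix.mulVec_mulVec, Matrix.dotProduct_mulVec,
        Matrix.conjTranspose_eq_transpose_of_trivial, Matrix.vecMul_transpose,
        Matrix.mulVec_mulVec, ← Matrix.conjTranspose_eq_transpose_of_trivial, ← hMdef,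
        Matrix.mulVec_mulVec, Matrix.dotProduct_mulVec, ← Matrix.mulVec_transpose, hGT,
        Matrix.mulVec_mulVec, hGMG]
    -- Step C : diagonal quadratic form
    have diagquad : ∀ c : Fin n → ℝ,
        ((U * diagonal c * star U) *ᵥ u) ⬝ᵥ u = ∑ i, c i * (w i) ^ 2 := by
      intro c
      rw [← Matrix.mulVec_mulVec, ← Matrix.mulVec_mulVec, dotProduct_comm,
        Matrix.dotProduct_mulVec, ← Matrix.mulVec_transpose, hUT, ← hw]
      simp only [dotProduct, Matrix.mulVec_diagonal]
      exact Finset.sum_congr rfl fun i _ => by ring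
    have stepC : (G *ᵥ u) ⬝ᵥ u = ∑ i, (lam i)⁻¹ * (w i) ^ 2 := by
      rw [hGdef]; exact diagquad _
    -- Step D : ∑ w² = ∑ u²
    have stepD : ∑ i, (w i) ^ 2 = ∑ i, (u i) ^ 2 := by
      have e0 : ∑ i, (w i) ^ 2 = w ⬝ᵥ w := by simp [dotProduct, sq]
      have e1 : ∑ i, (u i) ^ 2 = u ⬝ᵥ u := by simp [dotProduct, sq]
      rw [e0, e1, hw, Matrix.dotProduct_mulVec, ← hUT, Matrix.vecMul_transpose, hUT,
        Matrix.mulVec_mulVec, hU, Matrix.one_mulVec]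
    -- assemble
    rw [stepB, stepC]
    have hbd : ∑ i, (lam i)⁻¹ * (w i) ^ 2 ≤ (k : ℝ) ^ (2 * n) * ∑ i, (w i) ^ 2 := by
      rw [Finset.mul_sum]
      apply Finset.sum_le_sum
      intro i _
      exact mul_le_mul_of_nonneg_right (hinvle i) (sq_nonneg _)
    refine hbd.trans ?_
    rw [stepD]
    have h1n : (1 : ℝ) ≤ (n : ℝ) := by exact_mod_cast hn
    have hnn : (0:ℝ) ≤ (k : ℝ) ^ (2 * n) * ∑ i, (u i) ^ 2 := by
      apply mul_nonneg hKpos.le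
      exact Finset.sum_nonneg fun i _ => sq_nonneg _
    calc (k : ℝ) ^ (2 * n) * ∑ i, (u i) ^ 2
        ≤ (n : ℝ) * ((k : ℝ) ^ (2 * n) * ∑ i, (u i) ^ 2) := le_mul_of_one_le_left hnn h1n
      _ = (n : ℝ) * (k : ℝ) ^ (2 * n) * ∑ i, (u i) ^ 2 := by ring
end

section
/- Let P be an r×r symmetric matrix with integer entries of the form P_{ij} = ⟨a_i, a_j⟩, where a_1,…,a_r ∈ ℝ^n are vectors with entries in {-1,0,1}, each having at most k nonzero entries, and such that each coordinate direction e_i satisfies: at most k of the vectors a_1,…,a_r have a nonzero i-th entry. Then every l×l minor of P has absolute value at most k^(2l-1). -/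
open Finset

/-- Sum over permutations of a product over a subset is at most the product of column sums. -/
lemma perm_sum_le {m : ℕ} (s : Finset (Fin m)) (F : Fin m → Fin m → ℝ)
    (hF : ∀ i j, 0 ≤ F i j)
    (hs : ∀ σ τ : Equiv.Perm (Fin m), (∀ i ∈ s, σ i = τ i) → σ = τ) :
    ∑ σ : Equiv.Perm (Fin m), ∏ i ∈ s, F (σ i) i ≤ ∏ i ∈ s, ∑ j, F j i := by
  classical
  rw [Finset.prod_sum s (fun _ => Finset.univ) (fun i j => F j i)]
  set H : (∀ i ∈ s, Fin m) → ℝ := fun p => ∏ x ∈ s.attach, F (p x.1 x.2) x.1 with hH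
  have hterm : ∀ σ : Equiv.Perm (Fin m), ∏ i ∈ s, F (σ i) i = H (fun i _ => σ i) := by
    intro σ
    rw [hH]
    exact (Finset.prod_attach s fun i => F (σ i) i).symm
  have hinj : ∀ σ ∈ (Finset.univ : Finset (Equiv.Perm (Fin m))), ∀ τ ∈ Finset.univ,
      (fun i (_ : i ∈ s) => σ i) = (fun i (_ : i ∈ s) => τ i) → σ = τ := by
    intro σ _ τ _ h
    apply hs
    intro i hi
    exact congrFun (congrFun h i) hi
  calc ∑ σ : Equiv.Perm (Fin m), ∏ i ∈ s, F (σ i) i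
      = ∑ σ : Equiv.Perm (Fin m), H (fun i _ => σ i) := by
        exact Finset.sum_congr rfl fun σ _ => hterm σ
    _ = ∑ p ∈ Finset.univ.image (fun σ : Equiv.Perm (Fin m) => fun i (_ : i ∈ s) => σ i), H p :=
        (Finset.sum_image hinj).symm
    _ ≤ ∑ p ∈ s.pi (fun _ => Finset.univ), H p := by
        apply Finset.sum_le_sum_of_subset_of_nonneg
        · intro p hp
          simp only [Finset.mem_pi, Finset.mem_univ, forall_true_iff]
        · intro p _ _
          exact Finset.prod_nonneg fun x _ => hF _ _

/-- Determinant bound: one entry bound times column-sum bounds. -/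
lemma det_bound {l : ℕ} (M : Matrix (Fin (l + 1)) (Fin (l + 1)) ℝ) (c R : ℝ)
    (hc0 : 0 ≤ c) (hR0 : 0 ≤ R)
    (hc : ∀ i j, |M i j| ≤ c) (hR : ∀ j, ∑ i, |M i j| ≤ R) :
    |M.det| ≤ c * R ^ l := by
  classical
  set s : Finset (Fin (l + 1)) := Finset.univ.erase 0 with hsdef
  have hcard : s.card = l := by
    rw [hsdef, Finset.card_erase_of_mem (Finset.mem_univ _), Finset.card_univ]
    simp
  have hs : ∀ σ τ : Equiv.Perm (Fin (l + 1)), (∀ i ∈ s, σ i = τ i) → σ = τ := by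
    intro σ τ h
    have h' : ∀ i : Fin (l + 1), i ≠ 0 → σ i = τ i := by
      intro i hi
      exact h i (Finset.mem_erase.2 ⟨hi, Finset.mem_univ _⟩)
    apply Equiv.ext
    intro i
    by_cases hi : i = 0
    · subst hi
      by_contra hne
      set j := σ.symm (τ 0) with hj
      have hσj : σ j = τ 0 := σ.apply_symm_apply _
      have hjne : j ≠ 0 := by
        intro h0
        rw [h0] at hσj
        exact hne hσj
      have : τ 0 = τ j := by rw [← hσj, h' j hjne]
      have : (0 : Fin (l + 1)) = j := τ.injective this
      exact hjne this.symm
    · exact h' i hi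
  have step1 : |M.det| ≤ ∑ σ : Equiv.Perm (Fin (l + 1)), ∏ i, |M (σ i) i| := by
    rw [Matrix.det_apply]
    refine (Finset.abs_sum_le_sum_abs _ _).trans ?_
    apply Finset.sum_le_sum
    intro σ _
    rcases Int.units_eq_one_or (Equiv.Perm.sign σ) with h | h <;>
      rw [h] <;> simp [abs_prod]
  have step2 : ∀ σ : Equiv.Perm (Fin (l + 1)), ∏ i, |M (σ i) i| ≤ c * ∏ i ∈ s, |M (σ i) i| := by
    intro σ
    have : (Finset.univ : Finset (Fin (l + 1))) = insert 0 s := by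
      rw [hsdef, Finset.insert_erase (Finset.mem_univ _)]
    rw [this, Finset.prod_insert (Finset.notMem_erase _ _)]
    exact mul_le_mul_of_nonneg_right (hc _ _) (Finset.prod_nonneg fun i _ => abs_nonneg _)
  calc |M.det| ≤ ∑ σ : Equiv.Perm (Fin (l + 1)), ∏ i, |M (σ i) i| := step1
    _ ≤ ∑ σ : Equiv.Perm (Fin (l + 1)), c * ∏ i ∈ s, |M (σ i) i| :=
        Finset.sum_le_sum fun σ _ => step2 σ
    _ = c * ∑ σ : Equiv.Perm (Fin (l + 1)), ∏ i ∈ s, |M (σ i) i| := by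
        rw [Finset.mul_sum]
    _ ≤ c * ∏ i ∈ s, ∑ j, |M j i| := by
        apply mul_le_mul_of_nonneg_left _ hc0
        exact perm_sum_le s (fun i j => |M i j|) (fun _ _ => abs_nonneg _) hs
    _ ≤ c * ∏ _i ∈ s, R := by
        apply mul_le_mul_of_nonneg_left _ hc0
        exact Finset.prod_le_prod (fun i _ => Finset.sum_nonneg fun j _ => abs_nonneg _)
          (fun i _ => hR i)
    _ = c * R ^ l := by rw [Finset.prod_const, hcard]

/-- Let `P` be the `r × r` integer Gram matrix `P i j = ⟨a i, a j⟩` of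
vectors `a 1, …, a r ∈ ℝ^n` with entries in `{-1,0,1}`, each having at most `k` nonzero
entries, and such that for each coordinate `i` at most `k` of the vectors have a nonzero
`i`-th entry.  Then every `l × l` minor of `P` has absolute value at most `k^(2l-1)`. -/
theorem stmt_1 (r n k : ℕ) (a : Fin r → (Fin n → ℝ))
    (hentries : ∀ j i, a j i = -1 ∨ a j i = 0 ∨ a j i = 1)
    (hvec : ∀ j : Fin r, (Finset.univ.filter fun i : Fin n => a j i ≠ 0).card ≤ k)
    (hcoord : ∀ i : Fin n, (Finset.univ.filter fun j : Fin r => a j i ≠ 0).card ≤ k)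
    (P : Matrix (Fin r) (Fin r) ℝ)
    (hP : ∀ i j, P i j = ∑ t, a i t * a j t)
    (l : ℕ) (f g : Fin l → Fin r) (hf : StrictMono f) (hg : StrictMono g) :
    |Matrix.det (P.submatrix f g)| ≤ (k : ℝ) ^ (2 * l - 1) := by
  classical
  have hk0 : (0 : ℝ) ≤ (k : ℝ) := Nat.cast_nonneg k
  have habs1 : ∀ j i, |a j i| ≤ 1 := by
    intro j i
    rcases hentries j i with h | h | h <;> rw [h] <;> norm_num
  have hsum_vec : ∀ j, ∑ t, |a j t| ≤ (k : ℝ) := by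
    intro j
    have h1 : ∑ t, |a j t| = ∑ t ∈ Finset.univ.filter (fun i => a j i ≠ 0), |a j t| := by
      symm
      apply Finset.sum_subset (Finset.filter_subset _ _)
      intro t _ ht
      simp only [Finset.mem_filter, Finset.mem_univ, true_and, not_not] at ht
      rw [ht, abs_zero]
    rw [h1]
    calc ∑ t ∈ Finset.univ.filter (fun i => a j i ≠ 0), |a j t|
        ≤ ∑ _t ∈ Finset.univ.filter (fun i => a j i ≠ 0), (1 : ℝ) :=
          Finset.sum_le_sum fun t _ => habs1 j t
      _ = ((Finset.univ.filter (fun i => a j i ≠ 0)).card : ℝ) := by simp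
      _ ≤ (k : ℝ) := by exact_mod_cast hvec j
  have hsum_coord : ∀ t, ∑ j : Fin r, |a j t| ≤ (k : ℝ) := by
    intro t
    have h1 : ∑ j : Fin r, |a j t| = ∑ j ∈ Finset.univ.filter (fun j : Fin r => a j t ≠ 0), |a j t| := by
      symm
      apply Finset.sum_subset (Finset.filter_subset _ _)
      intro j _ hj
      simp only [Finset.mem_filter, Finset.mem_univ, true_and, not_not] at hj
      rw [hj, abs_zero]
    rw [h1]
    calc ∑ j ∈ Finset.univ.filter (fun j : Fin r => a j t ≠ 0), |a j t|
        ≤ ∑ _j ∈ Finset.univ.filter (fun j : Fin r => a j t ≠ 0), (1 : ℝ) :=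
          Finset.sum_le_sum fun j _ => habs1 j t
      _ = ((Finset.univ.filter (fun j : Fin r => a j t ≠ 0)).card : ℝ) := by simp
      _ ≤ (k : ℝ) := by exact_mod_cast hcoord t
  have hPabs : ∀ i j, |P i j| ≤ ∑ t, |a i t| * |a j t| := by
    intro i j
    rw [hP]
    refine (Finset.abs_sum_le_sum_abs _ _).trans ?_
    apply Finset.sum_le_sum
    intro t _
    rw [abs_mul]
  have hentry : ∀ i j, |P i j| ≤ (k : ℝ) := by
    intro i j
    refine (hPabs i j).trans ?_
    calc ∑ t, |a i t| * |a j t| ≤ ∑ t, |a i t| * 1 :=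
          Finset.sum_le_sum fun t _ => mul_le_mul_of_nonneg_left (habs1 j t) (abs_nonneg _)
      _ = ∑ t, |a i t| := by simp
      _ ≤ (k : ℝ) := hsum_vec i
  have hcol : ∀ j0 : Fin r, ∑ i : Fin r, |P i j0| ≤ (k : ℝ) ^ 2 := by
    intro j0
    calc ∑ i : Fin r, |P i j0| ≤ ∑ i : Fin r, ∑ t, |a i t| * |a j0 t| :=
          Finset.sum_le_sum fun i _ => hPabs i j0
      _ = ∑ t, (∑ i : Fin r, |a i t|) * |a j0 t| := by
          rw [Finset.sum_comm]
          exact Finset.sum_congr rfl fun t _ => (Finset.sum_mul _ _ _).symm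
      _ ≤ ∑ t, (k : ℝ) * |a j0 t| := by
          apply Finset.sum_le_sum
          intro t _
          exact mul_le_mul_of_nonneg_right (hsum_coord t) (abs_nonneg _)
      _ = (k : ℝ) * ∑ t, |a j0 t| := (Finset.mul_sum _ _ _).symm
      _ ≤ (k : ℝ) * (k : ℝ) := mul_le_mul_of_nonneg_left (hsum_vec j0) hk0
      _ = (k : ℝ) ^ 2 := (sq (k : ℝ)).symm
  cases l with
  | zero =>
      simp [Matrix.det_fin_zero]
  | succ m =>
      have hcolsub : ∀ j' : Fin (m + 1), ∑ i' : Fin (m + 1), |(P.submatrix f g) i' j'| ≤ (k : ℝ) ^ 2 := by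
        intro j'
        calc ∑ i' : Fin (m + 1), |P (f i') (g j')|
            = ∑ i ∈ Finset.univ.image f, |P i (g j')| := by
              rw [Finset.sum_image (fun x _ y _ h => hf.injective h)]
          _ ≤ ∑ i : Fin r, |P i (g j')| := by
              apply Finset.sum_le_sum_of_subset_of_nonneg (Finset.subset_univ _)
              intro i _ _
              exact abs_nonneg _
          _ ≤ (k : ℝ) ^ 2 := hcol (g j')
      have hmain : |Matrix.det (P.submatrix f g)| ≤ (k : ℝ) * ((k : ℝ) ^ 2) ^ m :=
        det_bound (P.submatrix f g) (k : ℝ) ((k : ℝ) ^ 2) hk0 (by positivity)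
          (fun i j => hentry _ _) hcolsub
      refine hmain.trans_eq ?_
      have h21 : 2 * (m + 1) - 1 = 2 * m + 1 := by omega
      rw [h21]
      ring
end

section
/- Let a_1,…,a_r ∈ ℝ^n be linearly independent vectors with integer coordinates, and let P_1 denote the orthogonal projection onto the orthogonal complement of span{a_2,…,a_r} inside span{a_1,…,a_r}. If every (r-1)×(r-1) minor of the Gram matrix of (a_1,…,a_r) is bounded in absolute value by C, then ‖P_1(a_1)‖² ≥ 1/C. Consequently, if u = Σ u_i a_i, then u_1² ≤ C·‖u‖². -/
/-!
Let `w = a₀ - P(a₀)` be the residual of `a₀` against the span of the other vectors. Subtracting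
from the first row of the Gram matrix the combination of the other rows that expresses `P(a₀)`
leaves the row `(‖w‖², 0, …, 0)`, so `det G(a) = ‖w‖² · det G(a₁, …, a_{r-1})`. By integrality
`det G(a)` is a positive integer, hence at least `1`, while the minor is at most `C`; thus
`‖w‖² ≥ 1/C`. Finally `⟪∑ uᵢ aᵢ, w⟫ = u₀ ‖w‖²`, and Cauchy–Schwarz gives `u₀² ‖w‖² ≤ ‖u‖²`.
-/

open Matrix Finset RealInnerProductSpace

namespace Matrix

variable {R : Type*} [CommRing R] {m : ℕ}

theorem det_updateRow_zero_sum_succ (A : Matrix (Fin (m + 1)) (Fin (m + 1)) R) (c : Fin m → R) :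
    (A.updateRow 0 (∑ k, c k • A k.succ)).det = 0 := by
  simpa [Fin.sum_univ_succ] using det_updateRow_sum A 0 (Fin.cons 0 c)

theorem det_updateRow_zero_of_apply_succ_eq_zero (A : Matrix (Fin (m + 1)) (Fin (m + 1)) R)
    {u : Fin (m + 1) → R} (hu : ∀ j : Fin m, u j.succ = 0) :
    (A.updateRow 0 u).det = u 0 * (A.submatrix Fin.succ Fin.succ).det := by
  rw [det_succ_row_zero, Fin.sum_univ_succ]
  simp only [hu, mul_zero, zero_mul, sum_const_zero, add_zero, updateRow_self]
  simp [← Fin.succAbove_zero]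

end Matrix

section

variable {E : Type*} [NormedAddCommGroup E] [InnerProductSpace ℝ E]

theorem inner_eq_norm_sq_of_mem_orthogonal_of_sub_mem {K : Submodule ℝ E} {x w : E}
    (hw : w ∈ Kᗮ) (hxw : x - w ∈ K) : ⟪x, w⟫ = ‖w‖ ^ 2 := by
  have h : ⟪x - w, w⟫ = 0 := hw _ hxw
  rw [inner_sub_left, real_inner_self_eq_norm_sq, sub_eq_zero] at h
  exact h

variable {m : ℕ} {v : Fin (m + 1) → E} {w : E}

theorem det_gram_eq_norm_sq_mul_det_gram_succ
    (hw : w ∈ (Submodule.span ℝ (Set.range (v ∘ Fin.succ)))ᗮ)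
    (hvw : v 0 - w ∈ Submodule.span ℝ (Set.range (v ∘ Fin.succ))) :
    (gram ℝ v).det = ‖w‖ ^ 2 * (gram ℝ (v ∘ Fin.succ)).det := by
  have hw_succ (j : Fin m) : ⟪w, v j.succ⟫ = 0 :=
    inner_eq_zero_symm.mp (hw _ (Submodule.subset_span ⟨j, rfl⟩))
  obtain ⟨c, hc⟩ := (Submodule.mem_span_range_iff_exists_fun ℝ).mp hvw
  have hrow : gram ℝ v 0 = (fun j ↦ ⟪w, v j⟫) + ∑ k, c k • gram ℝ v k.succ := by
    ext j
    have : ⟪v 0 - w, v j⟫ = ∑ k, c k * ⟪v k.succ, v j⟫ := by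
      simp [← hc, sum_inner, real_inner_smul_left]
    simp only [gram_apply, Pi.add_apply, Finset.sum_apply, Pi.smul_apply, smul_eq_mul, ← this]
    rw [inner_sub_left]
    ring
  calc (gram ℝ v).det = ((gram ℝ v).updateRow 0 (gram ℝ v 0)).det := by rw [updateRow_eq_self]
    _ = ((gram ℝ v).updateRow 0 fun j ↦ ⟪w, v j⟫).det := by
      rw [hrow, det_updateRow_add, det_updateRow_zero_sum_succ, add_zero]
    _ = ‖w‖ ^ 2 * (gram ℝ (v ∘ Fin.succ)).det := by
      rw [det_updateRow_zero_of_apply_succ_eq_zero _ hw_succ, real_inner_comm,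
        inner_eq_norm_sq_of_mem_orthogonal_of_sub_mem hw hvw]
      rfl

theorem sq_mul_norm_sq_le_norm_sq_sum
    (hw : w ∈ (Submodule.span ℝ (Set.range (v ∘ Fin.succ)))ᗮ)
    (hvw : v 0 - w ∈ Submodule.span ℝ (Set.range (v ∘ Fin.succ))) (u : Fin (m + 1) → ℝ) :
    u 0 ^ 2 * ‖w‖ ^ 2 ≤ ‖∑ i, u i • v i‖ ^ 2 := by
  have hw_succ (j : Fin m) : ⟪v j.succ, w⟫ = 0 := hw _ (Submodule.subset_span ⟨j, rfl⟩)
  have hinner : ⟪∑ i, u i • v i, w⟫ = u 0 * ‖w‖ ^ 2 := by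
    rw [sum_inner, Fin.sum_univ_succ, real_inner_smul_left,
      inner_eq_norm_sq_of_mem_orthogonal_of_sub_mem hw hvw]
    simp [real_inner_smul_left, hw_succ]
  have hcs : (u 0 * ‖w‖ ^ 2) ^ 2 ≤ ‖w‖ ^ 2 * ‖∑ i, u i • v i‖ ^ 2 := by
    rw [← hinner, mul_comm, ← mul_pow]
    exact sq_le_sq' (neg_le_of_abs_le (abs_real_inner_le_norm _ _)) (real_inner_le_norm _ _)
  rcases (sq_nonneg ‖w‖).eq_or_lt with h | h
  · rw [← h, mul_zero]; positivity
  · nlinarith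

end

theorem one_le_det_gram_of_int {ι : Type*} [Fintype ι] [DecidableEq ι] {n : ℕ}
    {a : ι → EuclideanSpace ℝ (Fin n)} (hint : ∀ i j, ∃ z : ℤ, a i j = z)
    (hli : LinearIndependent ℝ a) : 1 ≤ (gram ℝ a).det := by
  choose z hz using hint
  have hgram : gram ℝ a = (of fun i j ↦ ∑ k, z i k * z j k).map (Int.cast : ℤ → ℝ) := by
    ext i j
    simp [gram_apply, PiLp.inner_apply, hz, mul_comm]
  have hpos := (posDef_gram_of_linearIndependent hli).det_pos
  rw [hgram, ← Int.cast_det] at hpos ⊢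
  have hone : 1 ≤ (of fun i j ↦ ∑ k, z i k * z j k).det := Int.cast_pos.mp hpos
  exact_mod_cast hone

/-- Let `a 0, …, a (r-1) ∈ ℝ^n` be linearly independent vectors with integer
coordinates and let `P₁` be the orthogonal projection onto the orthogonal complement of
`span {a 1, …, a (r-1)}` (inside `span {a 0, …, a (r-1)}`, equivalently
`P₁ (a 0) = a 0 - proj_{span {a i, i ≠ 0}} (a 0)`).  If every `(r-1) × (r-1)` minor of the
Gram matrix of `(a i)` is bounded in absolute value by `C`, then `‖P₁ (a 0)‖² ≥ 1/C`;
consequently, if `u = ∑ uᵢ aᵢ` then `u₀² ≤ C · ‖u‖²`. -/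
theorem stmt_2 (r n : ℕ) (hr : 0 < r) (C : ℝ) (hC : 0 < C)
    (a : Fin r → EuclideanSpace ℝ (Fin n))
    (hint : ∀ i j, ∃ z : ℤ, a i j = (z : ℝ))
    (hli : LinearIndependent ℝ a)
    (hminor : ∀ f g : Fin (r - 1) → Fin r, StrictMono f → StrictMono g →
      |Matrix.det ((Matrix.of fun i j => (inner ℝ (a i) (a j) : ℝ)).submatrix f g)| ≤ C) :
    (1 / C ≤
      ‖a ⟨0, hr⟩ - (Submodule.orthogonalProjectionOnto
        (Submodule.span ℝ (a '' {i | i ≠ ⟨0, hr⟩})) (a ⟨0, hr⟩) : EuclideanSpace ℝ (Fin n))‖ ^ 2) ∧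
    ∀ u : Fin r → ℝ, (u ⟨0, hr⟩) ^ 2 ≤ C * ‖∑ i, u i • a i‖ ^ 2 := by
  obtain ⟨m, rfl⟩ : ∃ m, r = m + 1 := ⟨r - 1, (Nat.succ_pred_eq_of_pos hr).symm⟩
  have hspan : a '' {i | i ≠ 0} = Set.range (a ∘ Fin.succ) := by
    rw [Set.range_comp, Fin.range_succ]; rfl
  change (1 / C ≤ ‖a 0 - (Submodule.span ℝ (a '' {i | i ≠ 0})).starProjection (a 0)‖ ^ 2) ∧
    ∀ u : Fin (m + 1) → ℝ, u 0 ^ 2 ≤ C * ‖∑ i, u i • a i‖ ^ 2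
  rw [hspan]
  set K := Submodule.span ℝ (Set.range (a ∘ Fin.succ))
  set w := a 0 - K.starProjection (a 0)
  have hwK : w ∈ Kᗮ := K.sub_starProjection_mem_orthogonal (a 0)
  have hvw : a 0 - w ∈ K := by simp [w]
  have hdet := det_gram_eq_norm_sq_mul_det_gram_succ hwK hvw
  have hone := one_le_det_gram_of_int hint hli
  have hminor_le : (gram ℝ (a ∘ Fin.succ)).det ≤ C :=
    le_of_abs_le (hminor _ _ Fin.strictMono_succ Fin.strictMono_succ)
  have hCw : 1 ≤ C * ‖w‖ ^ 2 := by nlinarith [sq_nonneg ‖w‖]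
  refine ⟨by rw [div_le_iff₀ hC]; linarith, fun u ↦ ?_⟩
  nlinarith [sq_mul_norm_sq_le_norm_sq_sum hwK hvw u, sq_nonneg (u 0)]
end

section
/- Let 𝒰 = {U_1,…,U_N} be a finite open cover of a topological space, and let δ : 𝒞^p(𝒰) → 𝒞^{p+1}(𝒰) be the Čech coboundary operator on real-valued Čech cochains. Suppose ν > 0 satisfies |{j : U_j ∩ U_I ≠ ∅}| ≤ ν for every simplex I of the nerve of 𝒰. Then for every p-cochain b, ‖δ b‖² ≤ (p+2)·ν·‖b‖², where the norm comes from the inner product (c₁, c₂) = Σ_{I ∈ S_p(𝒰)} c₁(I)c₂(I). -/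
open scoped Classical

noncomputable section

/-- The set of `q`-simplices of the nerve of the cover `U`: strictly increasing
`(q+1)`-tuples of indices whose members have nonempty common intersection. -/
def CechSimplex {X : Type*} (N : ℕ) (U : Fin N → Set X) (q : ℕ) : Type :=
  {s : Fin (q + 1) → Fin N // StrictMono s ∧ (⋂ i, U (s i)).Nonempty}

instance {X : Type*} (N : ℕ) (U : Fin N → Set X) (q : ℕ) :
    Fintype (CechSimplex N U q) := by
  unfold CechSimplex; infer_instance

/-- Real Čech `q`-cochains: functions on `(q+1)`-tuples of indices (the values on
non-simplices are irrelevant; norms are always taken over simplices). -/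
def CechCochain {X : Type*} (N : ℕ) (_U : Fin N → Set X) (q : ℕ) : Type :=
  (Fin (q + 1) → Fin N) → ℝ

/-- The Čech coboundary `δc(i₀,…,i_{q+1}) = ∑ⱼ (-1)ʲ c(i₀,…,îⱼ,…,i_{q+1})`. -/
def cechDelta {X : Type*} (N : ℕ) (U : Fin N → Set X) (q : ℕ)
    (c : CechCochain N U q) : CechCochain N U (q + 1) :=
  fun t => ∑ j : Fin (q + 2), (-1 : ℝ) ^ (j : ℕ) * c (t ∘ j.succAbove)

/-!
By Cauchy–Schwarz, `(δb)(t)²` is at most `p + 2` times the sum of `b²` over the `p + 2` facets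
of `t`. Summing over `t`, a `p`-simplex `s` is counted once for each pair `(t, j)` whose `j`-th
facet is `s`. Such a pair is determined by its opposite vertex `t j`, an index whose open set
meets `⋂ i, U (s i)`, so each `s` is counted at most `ν` times.
-/

open Finset

theorem Fin.range_eq_insert_range_comp_succAbove {α : Type*} {n : ℕ} (f : Fin (n + 1) → α)
    (j : Fin (n + 1)) : Set.range f = insert (f j) (Set.range (f ∘ j.succAbove)) := by
  rw [Set.range_comp, Fin.range_succAbove, ← Set.image_insert_eq, Set.insert_eq,
    Set.union_compl_self, Set.image_univ]

theorem Finset.sum_comp_le_mul_sum_of_card_fiber_le {ι κ R : Type*} [Fintype ι] [Fintype κ]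
    [DecidableEq κ] [Semiring R] [PartialOrder R] [IsOrderedRing R] (F : ι → κ) (f : κ → R)
    (hf : ∀ y, 0 ≤ f y) {ν : ℕ} (hF : ∀ y, #{x | F x = y} ≤ ν) :
    ∑ x, f (F x) ≤ ν * ∑ y, f y := by
  rw [← Finset.sum_fiberwise' univ F f, mul_sum]
  gcongr with y
  rw [sum_const, nsmul_eq_mul]
  gcongr
  · exact hf y
  · exact_mod_cast hF y

theorem sq_cechDelta_le {X : Type*} {N : ℕ} {U : Fin N → Set X} {q : ℕ}
    (c : CechCochain N U q) (t : Fin (q + 2) → Fin N) :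
    cechDelta N U q c t ^ 2 ≤ ((q : ℝ) + 2) * ∑ j : Fin (q + 2), c (t ∘ j.succAbove) ^ 2 := by
  calc cechDelta N U q c t ^ 2
      ≤ #(univ : Finset (Fin (q + 2))) *
          ∑ j : Fin (q + 2), ((-1 : ℝ) ^ (j : ℕ) * c (t ∘ j.succAbove)) ^ 2 :=
        sq_sum_le_card_mul_sum_sq
    _ = ((q : ℝ) + 2) * ∑ j : Fin (q + 2), c (t ∘ j.succAbove) ^ 2 := by
        simp only [card_univ, Fintype.card_fin, mul_pow, pow_right_comm _ _ 2, neg_one_sq, one_pow,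
          one_mul]
        push_cast; ring

namespace CechSimplex

variable {X : Type*} {N : ℕ} {U : Fin N → Set X} {q : ℕ}

def face (t : CechSimplex N U (q + 1)) (j : Fin (q + 2)) : CechSimplex N U q :=
  ⟨t.1 ∘ j.succAbove, t.2.1.comp (Fin.strictMono_succAbove j),
    t.2.2.mono (Set.iInter_mono' fun i => ⟨j.succAbove i, subset_rfl⟩)⟩

theorem nonempty_inter_of_face_eq {t : CechSimplex N U (q + 1)} {j : Fin (q + 2)}
    {s : CechSimplex N U q} (h : t.face j = s) : (U (t.1 j) ∩ ⋂ i, U (s.1 i)).Nonempty := by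
  refine t.2.2.mono fun x hx => ⟨Set.mem_iInter.1 hx j, ?_⟩
  rw [← h]
  exact Set.mem_iInter.2 fun i => Set.mem_iInter.1 hx (j.succAbove i)

theorem injOn_opposite_vertex (s : CechSimplex N U q) :
    Set.InjOn (fun x : CechSimplex N U (q + 1) × Fin (q + 2) => x.1.1 x.2)
      {x | x.1.face x.2 = s} := by
  rintro ⟨t, j⟩ (ht : t.face j = s) ⟨t', j'⟩ (ht' : t'.face j' = s) (hv : t.1 j = t'.1 j')
  have hrange : Set.range t.1 = Set.range t'.1 := by
    rw [Fin.range_eq_insert_range_comp_succAbove t.1 j,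
      Fin.range_eq_insert_range_comp_succAbove t'.1 j', hv]
    exact congrArg (fun s : CechSimplex N U q => insert _ (Set.range s.1)) (ht.trans ht'.symm)
  have htt' : t = t' := Subtype.ext ((t.2.1.range_inj t'.2.1).1 hrange)
  subst htt'
  exact Prod.ext rfl (t.2.1.injective hv)

theorem card_face_fiber_le (s : CechSimplex N U q) :
    #{x : CechSimplex N U (q + 1) × Fin (q + 2) | x.1.face x.2 = s} ≤
      #{j : Fin N | (U j ∩ ⋂ i, U (s.1 i)).Nonempty} :=
  card_le_card_of_injOn _
    (fun x hx => by simpa using nonempty_inter_of_face_eq (mem_filter.1 hx).2)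
    (fun x hx y hy => injOn_opposite_vertex s (by simpa using hx) (by simpa using hy))

end CechSimplex

theorem stmt_5_general {X : Type*} (N : ℕ) (U : Fin N → Set X)
    (p : ℕ) (ν : ℕ)
    (hmult : ∀ (q : ℕ) (s : Fin (q + 1) → Fin N), StrictMono s →
      (⋂ i, U (s i)).Nonempty →
      (Finset.univ.filter fun j : Fin N => (U j ∩ ⋂ i, U (s i)).Nonempty).card ≤ ν)
    (b : CechCochain N U p) :
    ∑ t : CechSimplex N U (p + 1), (cechDelta N U p b t.1) ^ 2 ≤
      ((p : ℝ) + 2) * ν * ∑ s : CechSimplex N U p, (b s.1) ^ 2 := by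
  have hfiber (s : CechSimplex N U p) :
      #{x : CechSimplex N U (p + 1) × Fin (p + 2) | x.1.face x.2 = s} ≤ ν :=
    s.card_face_fiber_le.trans (hmult p s.1 s.2.1 s.2.2)
  calc ∑ t : CechSimplex N U (p + 1), (cechDelta N U p b t.1) ^ 2
      ≤ ∑ t : CechSimplex N U (p + 1), ((p : ℝ) + 2) * ∑ j, b (t.face j).1 ^ 2 :=
        sum_le_sum fun t _ => sq_cechDelta_le b t.1
    _ = ((p : ℝ) + 2) * ∑ x : CechSimplex N U (p + 1) × Fin (p + 2), b (x.1.face x.2).1 ^ 2 := by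
        rw [← mul_sum, Fintype.sum_prod_type]
    _ ≤ ((p : ℝ) + 2) * (ν * ∑ s : CechSimplex N U p, b s.1 ^ 2) := by
        gcongr
        exact sum_comp_le_mul_sum_of_card_fiber_le
          (fun x : CechSimplex N U (p + 1) × Fin (p + 2) => x.1.face x.2)
          (fun s : CechSimplex N U p => b s.1 ^ 2) (fun _ => sq_nonneg _) hfiber
    _ = ((p : ℝ) + 2) * ν * ∑ s : CechSimplex N U p, b s.1 ^ 2 := by ring

/-- If `𝒰 = {U₁,…,U_N}` is a finite open cover of a topological space and
`ν > 0` satisfies `|{j : U_j ∩ U_I ≠ ∅}| ≤ ν` for every simplex `I` of the nerve, then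
`‖δb‖² ≤ (p+2)·ν·‖b‖²` for every `p`-cochain `b`, where the norm comes from the ℓ²
inner product `(c₁, c₂) = ∑_{I ∈ S_p(𝒰)} c₁(I)·c₂(I)` on Čech cochains. -/
theorem stmt_5 {X : Type*} [TopologicalSpace X] (N : ℕ) (U : Fin N → Set X)
    (hopen : ∀ i, IsOpen (U i)) (hcover : (⋃ i, U i) = Set.univ)
    (p : ℕ) (ν : ℕ) (hν : 0 < ν)
    (hmult : ∀ (q : ℕ) (s : Fin (q + 1) → Fin N), StrictMono s →
      (⋂ i, U (s i)).Nonempty →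
      (Finset.univ.filter fun j : Fin N => (U j ∩ ⋂ i, U (s i)).Nonempty).card ≤ ν)
    (b : CechCochain N U p) :
    ∑ t : CechSimplex N U (p + 1), (cechDelta N U p b t.1) ^ 2 ≤
      ((p : ℝ) + 2) * ν * ∑ s : CechSimplex N U p, (b s.1) ^ 2 :=
  stmt_5_general N U p ν hmult b

end
end
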